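/- arXiv:1503.03461 — 6 statements merged into one kernel-verified Lean document; each statement's English description precedes it below -/
import Mathlib

section
/- If R satisfies the condition (C_σ) (i.e., for all a, b in R, a·σ(b) = 0 implies a·b = 0), then σ fixes every idempotent of R: for any e in R with e² = e, σ(e) = e. -/
theorem stmt0 {R : Type*} [Ring R] (σ : R →+* R)
    (hC : ∀ a b : R, a * σ b = 0 → a * b = 0) :
    ∀ e : R, e * e = e → σ e = e := by
  intro e he
  have h1 : σ e * σ (1 - e) = 0 := by
    rw [← map_mul]; rw [mul_sub, mul_one, he, sub_self, map_zero]
  have h2 : σ (1 - e) * σ e = 0 := by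
    rw [← map_mul]; rw [sub_mul, one_mul, he, sub_self, map_zero]
  have h3 : σ e * (1 - e) = 0 := hC _ _ h1
  have h4 : σ (1 - e) * e = 0 := hC _ _ h2
  have h5 : σ e = σ e * e := by
    have := h3; rw [mul_sub, mul_one, sub_eq_zero] at this; exact this
  have h6 : σ e * e = e := by
    rw [map_sub, map_one, sub_mul, one_mul, sub_eq_zero] at h4; exact h4.symm
  rw [h5, h6]
end

section
/- If R is σ-compatible, then σ fixes every idempotent of R: for any e in R with e² = e, σ(e) = e. -/
theorem stmt1 {R : Type*} [Ring R] (σ : R →+* R)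
    (hcompat : ∀ a b : R, a * b = 0 ↔ a * σ b = 0) :
    ∀ e : R, e * e = e → σ e = e := by
  intro e he
  have h1 : e * (1 - e) = 0 := by rw [mul_sub, mul_one, he, sub_self]
  have h2 : (1 - e) * e = 0 := by rw [sub_mul, one_mul, he, sub_self]
  have h1' : e * σ (1 - e) = 0 := (hcompat _ _).mp h1
  have h2' : (1 - e) * σ e = 0 := (hcompat _ _).mp h2
  rw [map_sub, map_one, mul_sub, mul_one, sub_eq_zero] at h1'
  rw [sub_mul, one_mul, sub_eq_zero] at h2'
  rw [h2', ← h1']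
end

section
/- A ring R is idempotent reflexive if and only if the polynomial ring R[x] is idempotent reflexive. -/
section Defs

variable (S : Type*) [Ring S]

/-- `S` is right idempotent reflexive: `aSe = 0` implies `eSa = 0` for idempotent `e`. -/
def RightIdemReflexive : Prop :=
  ∀ a e : S, e * e = e → (∀ r : S, a * r * e = 0) → ∀ r : S, e * r * a = 0

/-- `S` is left idempotent reflexive: `eSa = 0` implies `aSe = 0` for idempotent `e`. -/
def LeftIdemReflexive : Prop :=
  ∀ a e : S, e * e = e → (∀ r : S, e * r * a = 0) → ∀ r : S, a * r * e = 0

/-- `S` is idempotent reflexive if it is both left and right idempotent reflexive. -/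
def IdemReflexive : Prop := LeftIdemReflexive S ∧ RightIdemReflexive S

/-- `S` is abelian if every idempotent is central. -/
def IsAbelianRing : Prop := ∀ e : S, e * e = e → ∀ r : S, e * r = r * e

end Defs

/-!
For an idempotent `E = ∑ eⱼ Xʲ` of `R[X]` the constant term `e₀` is idempotent. If `f R[X] E = 0`,
comparing coefficients of `f (r e₀) E` and inducting on `i` gives `fᵢ R e₀ = 0`; reflexivity of `R`
at `e₀` turns this into `e₀ R fᵢ = 0`, and the identity `eⱼ = e₀ eⱼ + ∑_{0<k≤j} eₖ eⱼ₋ₖ` (from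
`E² = E`) propagates it to `eⱼ R fᵢ = 0` for all `j`, that is `E R[X] f = 0`. The left-handed
condition is the right-handed one for `Rᵐᵒᵖ`, and `R[X]ᵐᵒᵖ ≃ Rᵐᵒᵖ[X]`. The converse restricts to
the constants.
-/

open Polynomial Finset

section

variable {R S : Type*} [Ring R] [Ring S]

theorem leftIdemReflexive_iff_rightIdemReflexive_mulOpposite :
    LeftIdemReflexive R ↔ RightIdemReflexive Rᵐᵒᵖ := by
  constructor
  · intro h a e he hae r
    apply MulOpposite.unop_injective
    simpa [mul_assoc] using h a.unop e.unop (congrArg MulOpposite.unop he)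
      (fun s => by simpa [mul_assoc] using congrArg MulOpposite.unop (hae (.op s))) r.unop
  · intro h a e he hea r
    apply MulOpposite.op_injective
    simpa [mul_assoc] using h (.op a) (.op e) (congrArg MulOpposite.op he)
      (fun s => by simpa [mul_assoc] using congrArg MulOpposite.op (hea s.unop)) (.op r)

theorem RightIdemReflexive.of_ringEquiv (φ : R ≃+* S) (h : RightIdemReflexive R) :
    RightIdemReflexive S := by
  intro a e he hae r
  apply φ.symm.injective
  simpa using h (φ.symm a) (φ.symm e) (by rw [← map_mul, he])
    (fun s => by simpa using congrArg φ.symm (hae (φ s))) (φ.symm r)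

namespace Polynomial

theorem coeff_eq_sum_range_of_isIdempotentElem {E : R[X]} (hE : IsIdempotentElem E) (n : ℕ) :
    E.coeff n = ∑ k ∈ range (n + 1), E.coeff k * E.coeff (n - k) := by
  rw [← Nat.sum_antidiagonal_eq_sum_range_succ (fun i j => E.coeff i * E.coeff j), ← coeff_mul,
    hE.eq]

theorem coeff_mul_C_mul (f g : R[X]) (r : R) (n : ℕ) :
    (f * C r * g).coeff n = ∑ k ∈ range (n + 1), f.coeff k * r * g.coeff (n - k) := by
  rw [mul_assoc, coeff_mul, Nat.sum_antidiagonal_eq_sum_range_succ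
    (fun i j => f.coeff i * (C r * g).coeff j)]
  simp only [coeff_C_mul, mul_assoc]

theorem isIdempotentElem_coeff_zero {E : R[X]} (hE : IsIdempotentElem E) :
    IsIdempotentElem (E.coeff 0) := by
  simpa only [IsIdempotentElem, mul_coeff_zero] using congrArg (coeff · 0) hE.eq

theorem coeff_mul_mul_coeff_zero_eq_zero {f E : R[X]} (hE : IsIdempotentElem E)
    (hfE : ∀ r : R, f * C r * E = 0) (i : ℕ) (r : R) : f.coeff i * r * E.coeff 0 = 0 := by
  induction i using Nat.strong_induction_on generalizing r with
  | _ i ih =>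
    have h := congrArg (coeff · i) (hfE (r * E.coeff 0))
    simp only [coeff_mul_C_mul, coeff_zero, sum_range_succ, Nat.sub_self, ← mul_assoc] at h
    rwa [sum_eq_zero fun k hk => by rw [ih k (mem_range.mp hk) r, zero_mul], zero_add,
      mul_assoc (f.coeff i * r), (isIdempotentElem_coeff_zero hE).eq] at h

theorem coeff_mul_mul_eq_zero_of_coeff_zero {E : R[X]} (hE : IsIdempotentElem E) {x : R}
    (hx : ∀ r : R, E.coeff 0 * r * x = 0) (j : ℕ) (r : R) : E.coeff j * r * x = 0 := by
  induction j using Nat.strong_induction_on generalizing r with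
  | _ j ih =>
    rw [coeff_eq_sum_range_of_isIdempotentElem hE, sum_mul, sum_mul, sum_range_succ',
      sum_eq_zero fun k hk => ?_, zero_add, Nat.sub_zero]
    · simpa only [mul_assoc] using hx (E.coeff j * r)
    · simpa only [mul_assoc, mul_zero] using
        congrArg (E.coeff (k + 1) * ·) (ih (j - (k + 1)) (by rw [mem_range] at hk; omega) r)

theorem mul_mul_eq_zero_of_coeff_mul_mul_coeff {p q : R[X]}
    (h : ∀ i j : ℕ, ∀ r : R, p.coeff i * r * q.coeff j = 0) (g : R[X]) : p * g * q = 0 := by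
  ext n
  rw [coeff_zero, coeff_mul]
  refine sum_eq_zero fun x _ => ?_
  rw [coeff_mul, sum_mul]
  exact sum_eq_zero fun y _ => h y.1 x.2 (g.coeff y.2)

end Polynomial

theorem RightIdemReflexive.polynomial (h : RightIdemReflexive R) : RightIdemReflexive R[X] := by
  intro f E hE hfE
  have hE0 := isIdempotentElem_coeff_zero hE
  have hfE0 := coeff_mul_mul_coeff_zero_eq_zero hE fun r => hfE (C r)
  exact mul_mul_eq_zero_of_coeff_mul_mul_coeff fun j i =>
    coeff_mul_mul_eq_zero_of_coeff_zero hE (h _ _ hE0 (hfE0 i)) j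

theorem RightIdemReflexive.of_polynomial (h : RightIdemReflexive R[X]) : RightIdemReflexive R := by
  intro a e he hae r
  have hC : ∀ g : R[X], C a * g * C e = 0 := fun g => by
    ext n
    simpa only [coeff_mul_C, coeff_C_mul, coeff_zero] using hae (g.coeff n)
  simpa only [← C_mul, C_eq_zero] using h (C a) (C e) (by rw [← C_mul, he]) hC (C r)

theorem rightIdemReflexive_polynomial_iff : RightIdemReflexive R[X] ↔ RightIdemReflexive R :=
  ⟨.of_polynomial, .polynomial⟩

theorem leftIdemReflexive_polynomial_iff : LeftIdemReflexive R[X] ↔ LeftIdemReflexive R := by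
  rw [leftIdemReflexive_iff_rightIdemReflexive_mulOpposite,
    leftIdemReflexive_iff_rightIdemReflexive_mulOpposite,
    ← rightIdemReflexive_polynomial_iff (R := Rᵐᵒᵖ)]
  exact ⟨.of_ringEquiv (opRingEquiv R), .of_ringEquiv (opRingEquiv R).symm⟩

end

theorem stmt11 {R : Type*} [Ring R] :
    IdemReflexive R ↔ IdemReflexive (Polynomial R) := by
  rw [IdemReflexive, IdemReflexive, leftIdemReflexive_polynomial_iff,
    rightIdemReflexive_polynomial_iff]
end

section
/- A ring R is idempotent reflexive if and only if the power series ring R[[x]] is idempotent reflexive. -/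
/-!
An idempotent `E` of `R⟦X⟧` is conjugate, by a unit, to the constant idempotent `C e` with
`e = constantCoeff E`. Since the conditions `A R⟦X⟧ E = 0` and `E R⟦X⟧ A = 0` only see `E` up to
conjugation by units, they reduce to `A R⟦X⟧ (C e) = 0` and `(C e) R⟦X⟧ A = 0`, and testing these
against constants shows they hold iff `aₙ R e = 0`, resp. `e R aₙ = 0`, for every coefficient
`aₙ` of `A`. This moves idempotent reflexivity from `R` to `R⟦X⟧` coefficientwise, and back
through the constants.
-/

open PowerSeries

section Conjugation

variable {S : Type*} [Ring S]

theorem IsIdempotentElem.exists_units_conj_of_isUnit {e f : S} (he : IsIdempotentElem e)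
    (hf : IsIdempotentElem f) (hu : IsUnit (f * e + (1 - f) * (1 - e))) :
    ∃ u : Sˣ, f = u * e * ↑u⁻¹ := by
  obtain ⟨u, hu⟩ := hu
  have hfu : f * u = u * e := by
    have hf' : f * (1 - f) = 0 := by rw [mul_sub, mul_one, hf.eq, sub_self]
    have he' : (1 - e) * e = 0 := by rw [sub_mul, one_mul, he.eq, sub_self]
    calc f * u = f * e := by
          rw [hu, mul_add, ← mul_assoc f (1 - f), hf', zero_mul, add_zero, ← mul_assoc, hf.eq]
      _ = u * e := by
          rw [hu, add_mul, mul_assoc (1 - f), he', mul_zero, add_zero, mul_assoc, he.eq]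
  exact ⟨u, by rw [← hfu, mul_assoc, Units.mul_inv, mul_one]⟩

theorem forall_mul_mul_units_conj_eq_zero_iff (u : Sˣ) (a e : S) :
    (∀ r, a * r * (u * e * ↑u⁻¹) = 0) ↔ ∀ r, a * r * e = 0 := by
  constructor
  · intro h r
    simpa [mul_assoc] using congrArg (· * (u : S)) (h (r * ↑u⁻¹))
  · intro h r
    rw [← mul_assoc, ← mul_assoc, mul_assoc a, h, zero_mul]

theorem forall_units_conj_mul_mul_eq_zero_iff (u : Sˣ) (a e : S) :
    (∀ r, u * e * ↑u⁻¹ * r * a = 0) ↔ ∀ r, e * r * a = 0 := by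
  constructor
  · intro h r
    simpa [mul_assoc] using congrArg ((↑u⁻¹ : S) * ·) (h (u * r))
  · intro h r
    rw [mul_assoc _ _ r, mul_assoc, mul_assoc, ← mul_assoc e, h, mul_zero]

end Conjugation

namespace PowerSeries

variable {R : Type*} [Ring R]

theorem exists_units_conj_C_constantCoeff {E : R⟦X⟧} (hE : IsIdempotentElem E) :
    ∃ u : R⟦X⟧ˣ, E = u * C (constantCoeff E) * ↑u⁻¹ := by
  have he : IsIdempotentElem (constantCoeff E) := hE.map constantCoeff
  refine (he.map C).exists_units_conj_of_isUnit hE (isUnit_iff_constantCoeff.2 ?_)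
  have : constantCoeff E * constantCoeff E + (1 - constantCoeff E) * (1 - constantCoeff E) =
      1 := by
    rw [he.one_sub.eq, he.eq, add_sub_cancel]
  simp [this]

theorem forall_mul_mul_C_eq_zero_iff (A : R⟦X⟧) (e : R) :
    (∀ g : R⟦X⟧, A * g * C e = 0) ↔ ∀ n r, coeff n A * r * e = 0 := by
  constructor
  · intro h n r
    simpa [coeff_mul_C] using congrArg (coeff n) (h (C r))
  · intro h g
    ext n
    rw [map_zero, coeff_mul_C, coeff_mul, Finset.sum_mul]
    exact Finset.sum_eq_zero fun x _ => h x.1 _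

theorem forall_C_mul_mul_eq_zero_iff (A : R⟦X⟧) (e : R) :
    (∀ g : R⟦X⟧, C e * g * A = 0) ↔ ∀ n r, e * r * coeff n A = 0 := by
  constructor
  · intro h n r
    simpa [mul_assoc, coeff_C_mul] using congrArg (coeff n) (h (C r))
  · intro h g
    ext n
    rw [map_zero, mul_assoc, coeff_C_mul, coeff_mul, Finset.mul_sum]
    exact Finset.sum_eq_zero fun x _ => by rw [← mul_assoc]; exact h x.2 _

theorem forall_C_mul_mul_C_eq_zero_iff (a e : R) :
    (∀ g : R⟦X⟧, C a * g * C e = 0) ↔ ∀ r, a * r * e = 0 := by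
  rw [forall_mul_mul_C_eq_zero_iff]
  refine ⟨fun h => by simpa using h 0, fun h n r => ?_⟩
  rcases n with _ | n <;> simp [coeff_C, h]

theorem forall_mul_mul_idem_eq_zero_iff {E : R⟦X⟧} (hE : IsIdempotentElem E)
    (A : R⟦X⟧) :
    (∀ g, A * g * E = 0) ↔ ∀ n r, coeff n A * r * constantCoeff E = 0 := by
  obtain ⟨u, hu⟩ := exists_units_conj_C_constantCoeff hE
  conv_lhs => rw [hu]
  exact (forall_mul_mul_units_conj_eq_zero_iff u _ _).trans (forall_mul_mul_C_eq_zero_iff _ _)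

theorem forall_idem_mul_mul_eq_zero_iff {E : R⟦X⟧} (hE : IsIdempotentElem E)
    (A : R⟦X⟧) :
    (∀ g, E * g * A = 0) ↔ ∀ n r, constantCoeff E * r * coeff n A = 0 := by
  obtain ⟨u, hu⟩ := exists_units_conj_C_constantCoeff hE
  conv_lhs => rw [hu]
  exact (forall_units_conj_mul_mul_eq_zero_iff u _ _).trans (forall_C_mul_mul_eq_zero_iff _ _)

end PowerSeries

section Transfer

variable {R : Type*} [Ring R]

theorem RightIdemReflexive.powerSeries (h : RightIdemReflexive R) :
    RightIdemReflexive R⟦X⟧ := by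
  intro A E hE hAE
  rw [forall_mul_mul_idem_eq_zero_iff hE] at hAE
  rw [forall_idem_mul_mul_eq_zero_iff hE]
  exact fun n => h _ _ (IsIdempotentElem.map hE constantCoeff) (hAE n)

theorem LeftIdemReflexive.powerSeries (h : LeftIdemReflexive R) :
    LeftIdemReflexive R⟦X⟧ := by
  intro A E hE hEA
  rw [forall_idem_mul_mul_eq_zero_iff hE] at hEA
  rw [forall_mul_mul_idem_eq_zero_iff hE]
  exact fun n => h _ _ (IsIdempotentElem.map hE constantCoeff) (hEA n)

theorem RightIdemReflexive.of_powerSeries (h : RightIdemReflexive R⟦X⟧) :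
    RightIdemReflexive R := by
  intro a e he hae
  rw [← forall_C_mul_mul_C_eq_zero_iff] at hae ⊢
  exact h _ _ (IsIdempotentElem.map he C) hae

theorem LeftIdemReflexive.of_powerSeries (h : LeftIdemReflexive R⟦X⟧) :
    LeftIdemReflexive R := by
  intro a e he hea
  rw [← forall_C_mul_mul_C_eq_zero_iff] at hea ⊢
  exact h _ _ (IsIdempotentElem.map he C) hea

end Transfer

theorem stmt12 {R : Type*} [Ring R] :
    IdemReflexive R ↔ IdemReflexive (PowerSeries R) :=
  ⟨fun ⟨hl, hr⟩ => ⟨hl.powerSeries, hr.powerSeries⟩,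
    fun ⟨hl, hr⟩ => ⟨hl.of_powerSeries, hr.of_powerSeries⟩⟩
end

section
/- A ring R is abelian if and only if the polynomial ring R[x] is abelian. -/
theorem stmt16 {R : Type*} [Ring R] :
    IsAbelianRing R ↔ IsAbelianRing (Polynomial R) := by
  constructor
  · intro h p hp r
    set a : ℕ → R := fun n => p.coeff n with ha
    have h0 : a 0 * a 0 = a 0 := by
      have := congrArg (fun q => Polynomial.coeff q 0) hp
      simpa [Polynomial.mul_coeff_zero, ha] using this
    have hc : ∀ s : R, a 0 * s = s * a 0 := h (a 0) h0
    have hn : ∀ n, 0 < n → a n = 0 := by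
      intro n
      induction n using Nat.strong_induction_on with
      | _ n ih =>
        intro hpos
        have hcoeff : (∑ i ∈ Finset.range (n + 1), a i * a (n - i)) = a n := by
          have := congrArg (fun q => Polynomial.coeff q n) hp
          simpa [Polynomial.coeff_mul,
            Finset.Nat.sum_antidiagonal_eq_sum_range_succ_mk, ha] using this
        have hmid : (∑ i ∈ Finset.range n, a i * a (n - i)) = a 0 * a n := by
          rw [Finset.sum_eq_single_of_mem 0 (Finset.mem_range.mpr hpos)]
          · simp
          · intro i hi hine
            have : a i = 0 := ih i (Finset.mem_range.mp hi) (Nat.pos_of_ne_zero hine)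
            simp [this]
        have hsum : a 0 * a n + a n * a 0 = a n := by
          rw [Finset.sum_range_succ, hmid, Nat.sub_self] at hcoeff
          exact hcoeff
        have hsum' : a 0 * a n + a 0 * a n = a n := by
          nth_rewrite 2 [hc (a n)]
          exact hsum
        have h3 : a 0 * a n = 0 := by
          have h2 := congrArg (fun x => a 0 * x) hsum'
          simp only [mul_add, ← mul_assoc, h0] at h2
          exact add_eq_right.mp h2
        rw [← hsum', h3, add_zero]
    have hp' : p = Polynomial.C (a 0) := by
      ext n
      cases n with
      | zero => simp [ha]
      | succ m =>
        rw [Polynomial.coeff_C, if_neg (Nat.succ_ne_zero m)]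
        exact hn (m + 1) (Nat.succ_pos m)
    rw [hp']
    ext n
    simp [Polynomial.coeff_C_mul, Polynomial.coeff_mul_C, hc]
  · intro h e he r
    have := h (Polynomial.C e) (by rw [← Polynomial.C_mul, he]) (Polynomial.C r)
    rw [← Polynomial.C_mul, ← Polynomial.C_mul] at this
    exact Polynomial.C_injective this
end

section
/- A ring R is abelian if and only if the formal power series ring R[[x]] is abelian. -/
/-!
If `R` is abelian and `E` is an idempotent of `R[[x]]` with constant term `e`, then `F = C e` is a
central idempotent. Hence `E (1 - F)` and `(1 - E) F` are idempotents with zero constant term,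
and such an idempotent `G` vanishes, since `G = G ^ n` is divisible by `X ^ n` for every `n`.
So `E = E F = F` is central. Conversely, `C` is an injective ring homomorphism `R → R[[x]]`.
-/

namespace PowerSeries

variable {R : Type*} [Ring R]

theorem commute_C_of_forall_commute {a : R} (ha : ∀ r, Commute a r) (f : R⟦X⟧) :
    Commute (C a) f := by
  ext n
  rw [coeff_mul_C, coeff_C_mul, ha]

theorem eq_zero_of_isIdempotentElem_of_constantCoeff_eq_zero {G : R⟦X⟧}
    (hG : IsIdempotentElem G) (h0 : constantCoeff G = 0) : G = 0 := by
  ext n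
  obtain ⟨H, rfl⟩ := X_dvd_iff.mpr h0
  have hdvd : X ^ (n + 1) ∣ X * H := by
    rw [← hG.pow_succ_eq n, (commute_X H).symm.mul_pow]
    exact dvd_mul_right _ _
  exact X_pow_dvd_iff.mp hdvd n n.lt_succ_self

theorem eq_C_constantCoeff_of_isIdempotentElem (hR : IsAbelianRing R) {E : R⟦X⟧}
    (hE : IsIdempotentElem E) : E = C (constantCoeff E) := by
  set F := C (constantCoeff E)
  have he : IsIdempotentElem (constantCoeff E) := hE.map constantCoeff
  have hF : IsIdempotentElem F := he.map C
  have hEF : Commute E F := (commute_C_of_forall_commute (hR _ he) E).symm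
  have hE_mul_one_sub : E * (1 - F) = 0 := by
    refine eq_zero_of_isIdempotentElem_of_constantCoeff_eq_zero ?_ (by simp [F, he.eq, mul_sub])
    exact hE.mul_of_commute ((Commute.one_right E).sub_right hEF) hF.one_sub
  have hone_sub_mul : (1 - E) * F = 0 := by
    refine eq_zero_of_isIdempotentElem_of_constantCoeff_eq_zero ?_ (by simp [F, he.eq, sub_mul])
    exact hE.one_sub.mul_of_commute ((Commute.one_left F).sub_left hEF) hF
  calc E = E * F := by rwa [mul_sub, mul_one, sub_eq_zero] at hE_mul_one_sub
    _ = F := by rw [sub_mul, one_mul, sub_eq_zero] at hone_sub_mul; exact hone_sub_mul.symm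

end PowerSeries

theorem stmt17 {R : Type*} [Ring R] :
    IsAbelianRing R ↔ IsAbelianRing (PowerSeries R) := by
  constructor
  · intro hR E (hE : IsIdempotentElem E)
    rw [PowerSeries.eq_C_constantCoeff_of_isIdempotentElem hR hE]
    exact PowerSeries.commute_C_of_forall_commute (hR _ (hE.map PowerSeries.constantCoeff))
  · intro h e (he : IsIdempotentElem e) r
    have hCe : IsIdempotentElem (PowerSeries.C e) := he.map PowerSeries.C
    exact PowerSeries.C_injective (by simpa only [map_mul] using h _ hCe (PowerSeries.C r))
end
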